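/- arXiv:1204.4747 — 3 statements merged into one kernel-verified Lean document; each statement's English description precedes it below -/
import Mathlib

section
/- Let p be a prime, K a group, H = K ≀ ℤ/p, a ∈ K, τ a nonzero element of ℤ/p, and x = ((a,1,…,1),τ) ∈ H. Then x^p = diag(a), the cyclic subgroup D = ⟨diag(a)⟩ is contained in the center of the centralizer Z_H(x), and the quotient Z_H(x)/D is isomorphic to the direct product (Z_K(a)/⟨a⟩) × ℤ/p. In particular Z_H(x) is a central extension of (Z_K(a)/⟨a⟩) × ℤ/p by the cyclic group generated by a. -/
/-- The cyclic shift action of `ℤ/p` on `K^p`: the generator `1 ∈ ℤ/p` sends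
`(x_1, …, x_p)` to `(x_p, x_1, …, x_{p-1})`. -/
def cycShift (p : ℕ) (K : Type*) [Group K] :
    Multiplicative (ZMod p) →* MulAut (ZMod p → K) where
  toFun τ :=
    { toFun := fun x i => x (i - Multiplicative.toAdd τ)
      invFun := fun x i => x (i + Multiplicative.toAdd τ)
      left_inv := fun x => funext fun i => by simp
      right_inv := fun x => funext fun i => by simp
      map_mul' := fun x y => rfl }
  map_one' := by
    ext x i
    simp
  map_mul' := fun σ τ => by
    ext x i
    simp [sub_sub]

/-- The wreath product `K ≀ ℤ/p`. -/
abbrev WreathP (p : ℕ) (K : Type*) [Group K] :=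
  SemidirectProduct (ZMod p → K) (Multiplicative (ZMod p)) (cycShift p K)

/-- `a` as an element of its own centralizer. -/
def aZ (K : Type*) [Group K] (a : K) : Subgroup.centralizer ({a} : Set K) :=
  ⟨a, Subgroup.mem_centralizer_iff.mpr (by rintro g rfl; rfl)⟩

/-- `a` is central in `Z_K(a)`, so the cyclic subgroup `⟨a⟩` it generates is normal
in `Z_K(a)`. -/
instance aZ_zpowers_normal (K : Type*) [Group K] (a : K) :
    (Subgroup.zpowers (aZ K a)).Normal := by
  constructor
  intro n hn g
  rw [Subgroup.mem_zpowers_iff] at hn ⊢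
  obtain ⟨k, rfl⟩ := hn
  refine ⟨k, ?_⟩
  have hc : Commute (aZ K a) g := by
    have := Subgroup.mem_centralizer_iff.mp g.2 a rfl
    exact Subtype.ext this
  rw [eq_comm, mul_inv_eq_iff_eq_mul]
  exact ((hc.zpow_left k).symm).eq

/-! Commuting with `x = ((a,1,…,1),τ)` forces an element with trivial `ℤ/p`-part to be constant
along the `τ`-orbit, which is all of `ℤ/p`, so `Z_H(x) = {diag(c) x^m : c ∈ Z_K(a), m ∈ ℤ}`.
Thus `(c, m) ↦ diag(c) x^m` maps `Z_K(a) × ℤ` onto `Z_H(x)`; since `x^p = diag(a)`, its kernel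
`{(a^(-k), pk)}` lies in the kernel of `Z_K(a) × ℤ → (Z_K(a)/⟨a⟩) × ℤ/p`, and the induced map
`Z_H(x) → (Z_K(a)/⟨a⟩) × ℤ/p` has kernel the image `⟨diag(a)⟩` of the latter kernel. -/

namespace ZMod

variable {p : ℕ} {τ : Multiplicative (ZMod p)}

theorem natCard_multiplicative : Nat.card (Multiplicative (ZMod p)) = p :=
  (Nat.card_congr Multiplicative.toAdd).trans (Nat.card_zmod p)

theorem pow_prime_multiplicative : τ ^ p = 1 := by
  simpa only [natCard_multiplicative] using pow_card_eq_one' (x := τ)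

theorem pow_mod_multiplicative (n : ℕ) : τ ^ (n % p) = τ ^ n := by
  conv_rhs => rw [← Nat.mod_add_div n p, pow_add, pow_mul, pow_prime_multiplicative, one_pow,
    mul_one]

variable [Fact p.Prime]

theorem orderOf_multiplicative (hτ : τ ≠ 1) : orderOf τ = p :=
  orderOf_eq_prime pow_prime_multiplicative hτ

theorem zpow_eq_one_iff_multiplicative (hτ : τ ≠ 1) {n : ℤ} : τ ^ n = 1 ↔ (p : ℤ) ∣ n := by
  rw [← orderOf_dvd_iff_zpow_eq_one, orderOf_multiplicative hτ]

theorem exists_pow_eq_multiplicative (hτ : τ ≠ 1) (σ : Multiplicative (ZMod p)) :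
    ∃ n < p, τ ^ n = σ := by
  obtain ⟨n, rfl⟩ := mem_powers_iff_mem_zpowers.mpr
    (zpowers_eq_top_of_prime_card natCard_multiplicative hτ ▸ Subgroup.mem_top σ)
  exact ⟨n % p, Nat.mod_lt _ (Fact.out : p.Prime).pos, pow_mod_multiplicative n⟩

end ZMod

namespace WreathP

variable {p : ℕ} {K : Type*} [Group K]

theorem cycShift_apply (σ : Multiplicative (ZMod p)) (g : ZMod p → K) (i : ZMod p) :
    cycShift p K σ g i = g (i - σ.toAdd) := rfl

theorem right_pow (y : WreathP p K) (n : ℕ) : (y ^ n).right = y.right ^ n :=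
  map_pow SemidirectProduct.rightHom y n

theorem right_zpow (y : WreathP p K) (n : ℤ) : (y ^ n).right = y.right ^ n :=
  map_zpow SemidirectProduct.rightHom y n

def diag : K →* WreathP p K := SemidirectProduct.inl.comp (Pi.constMonoidHom (ZMod p) K)

@[simp]
theorem diag_right (c : K) : (diag c : WreathP p K).right = 1 := rfl

theorem diag_injective [NeZero p] : Function.Injective (diag : K → WreathP p K) :=
  fun _ _ h => congrFun (SemidirectProduct.inl_injective h) 0

theorem commute_mk_diag {g : ZMod p → K} {c : K} (σ : Multiplicative (ZMod p))
    (h : ∀ i, Commute (g i) c) : Commute (⟨g, σ⟩ : WreathP p K) (diag c) := by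
  ext i
  · show g i * c = c * g (i - 0)
    rw [sub_zero]
    exact h i
  · exact (Commute.one_right σ).eq

def singleShift (a : K) (τ : Multiplicative (ZMod p)) : WreathP p K :=
  ⟨Pi.mulSingle 0 a, τ⟩

@[simp]
theorem singleShift_left (a : K) (τ : Multiplicative (ZMod p)) :
    (singleShift a τ).left = Pi.mulSingle 0 a := rfl

@[simp]
theorem singleShift_right (a : K) (τ : Multiplicative (ZMod p)) :
    (singleShift a τ).right = τ := rfl

variable {a : K} {τ : Multiplicative (ZMod p)}

theorem commute_singleShift_diag {c : K} (hc : Commute a c) :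
    Commute (singleShift a τ) (diag c) :=
  commute_mk_diag τ fun i => by
    rcases eq_or_ne i 0 with rfl | hi
    · simpa using hc
    · simp [Pi.mulSingle_eq_of_ne hi]

section Prime

variable [Fact p.Prime]

variable (a) in
theorem singleShift_pow_left (hτ : τ ≠ 1) {m : ℕ} (hm : m ≤ p) {n : ℕ} (hn : n < p) :
    (singleShift a τ ^ m).left (τ ^ n).toAdd = if n < m then a else 1 := by
  induction m generalizing n with
  | zero => simp
  | succ m ih =>
    rw [pow_succ', SemidirectProduct.mul_left, Pi.mul_apply, cycShift_apply, singleShift_left,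
      singleShift_right]
    rcases n with _ | n
    · have hlast : (τ ^ 0).toAdd - τ.toAdd = (τ ^ (p - 1)).toAdd := by
        rw [pow_zero, toAdd_one, zero_sub, neg_eq_iff_add_eq_zero, ← toAdd_mul, ← pow_succ',
          Nat.sub_add_cancel (Fact.out : p.Prime).one_le, ZMod.pow_prime_multiplicative,
          toAdd_one]
      rw [hlast, ih (by omega) (by omega), if_neg (by omega)]
      simp
    · have hne : τ ^ (n + 1) ≠ 1 :=
        pow_ne_one_of_lt_orderOf (by omega) (by rwa [ZMod.orderOf_multiplicative hτ])
      rw [Pi.mulSingle_eq_of_ne (toAdd_eq_zero.not.mpr hne), one_mul, pow_succ, toAdd_mul,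
        add_sub_cancel_right, ih (by omega) (by omega)]
      simp

variable (a) in
theorem singleShift_pow_prime (hτ : τ ≠ 1) : singleShift a τ ^ p = diag a := by
  refine SemidirectProduct.ext (funext fun i => ?_) ?_
  · obtain ⟨n, hn, hi⟩ := ZMod.exists_pow_eq_multiplicative hτ (Multiplicative.ofAdd i)
    have := singleShift_pow_left a hτ le_rfl hn
    rwa [hi, if_pos hn] at this
  · rw [right_pow, singleShift_right, ZMod.pow_prime_multiplicative]
    rfl

theorem eq_const_of_commute_singleShift_inl (hτ : τ ≠ 1) {g : ZMod p → K}
    (h : Commute (singleShift a τ) (SemidirectProduct.inl g)) :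
    ∃ c, Commute a c ∧ g = fun _ => c := by
  have hrel : ∀ i, (Pi.mulSingle 0 a : ZMod p → K) i * g (i - τ.toAdd) =
      g i * (Pi.mulSingle 0 a : ZMod p → K) i := by
    intro i
    have := congrFun (congrArg SemidirectProduct.left h.eq) i
    rwa [SemidirectProduct.mul_left, SemidirectProduct.mul_left, Pi.mul_apply, Pi.mul_apply,
      cycShift_apply, cycShift_apply, SemidirectProduct.right_inl, toAdd_one, sub_zero,
      singleShift_left, singleShift_right] at this
  have hpow : ∀ n : ℕ, g (τ ^ n).toAdd = g 0 := by
    intro n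
    induction n with
    | zero => rw [pow_zero, toAdd_one]
    | succ n ih =>
      by_cases h1 : τ ^ (n + 1) = 1
      · rw [h1, toAdd_one]
      · have := hrel (τ ^ (n + 1)).toAdd
        rwa [Pi.mulSingle_eq_of_ne (toAdd_eq_zero.not.mpr h1), one_mul, mul_one, pow_succ,
          toAdd_mul, add_sub_cancel_right, ih, eq_comm, ← toAdd_mul, ← pow_succ] at this
  have hconst : ∀ i, g i = g 0 := fun i => by
    obtain ⟨n, -, hn⟩ := ZMod.exists_pow_eq_multiplicative hτ (Multiplicative.ofAdd i)
    simpa [hn] using hpow n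
  refine ⟨g 0, ?_, funext hconst⟩
  have := hrel 0
  rwa [Pi.mulSingle_eq_same, hconst] at this

end Prime

open Subgroup

variable (a : K) (τ : Multiplicative (ZMod p))

theorem diag_mem_centralizer {c : K} (hc : c ∈ centralizer {a}) :
    diag c ∈ centralizer {singleShift a τ} :=
  mem_centralizer_singleton_iff.mpr
    (commute_singleShift_diag (mem_centralizer_singleton_iff.mp hc).symm).eq.symm

def diagMulZPow : centralizer {a} × Multiplicative ℤ →* centralizer {singleShift a τ} :=
  MonoidHom.noncommCoprod
    ((diag.comp (centralizer {a}).subtype).codRestrict _ fun c => diag_mem_centralizer a τ c.2)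
    (zpowersHom _ ⟨singleShift a τ, mem_centralizer_singleton_iff.mpr rfl⟩)
    fun c _ => Commute.zpow_right (Subtype.ext
      (commute_singleShift_diag (mem_centralizer_singleton_iff.mp c.2).symm).symm.eq) _

theorem coe_diagMulZPow (y : centralizer {a} × Multiplicative ℤ) :
    (diagMulZPow a τ y : WreathP p K) = diag (y.1 : K) * singleShift a τ ^ y.2.toAdd := rfl

def mkProdZPow :
    centralizer {a} × Multiplicative ℤ →*
      (centralizer {a} ⧸ zpowers (aZ K a)) × Multiplicative (ZMod p) :=
  (QuotientGroup.mk' _).prodMap (zpowersHom _ τ)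

theorem mkProdZPow_apply (y : centralizer {a} × Multiplicative ℤ) :
    mkProdZPow a τ y = (QuotientGroup.mk y.1, τ ^ y.2.toAdd) := rfl

variable {a τ} [Fact p.Prime]

theorem exists_diag_mul_pow_of_mem_centralizer (hτ : τ ≠ 1) {z : WreathP p K}
    (hz : z ∈ centralizer {singleShift a τ}) :
    ∃ c ∈ centralizer {a}, ∃ n : ℕ, z = diag c * singleShift a τ ^ n := by
  obtain ⟨n, -, hn⟩ := ZMod.exists_pow_eq_multiplicative hτ z.right
  set w := z * (singleShift a τ ^ n)⁻¹
  have hw : w = SemidirectProduct.inl w.left := by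
    refine SemidirectProduct.ext rfl ?_
    rw [SemidirectProduct.right_inl, SemidirectProduct.mul_right, SemidirectProduct.inv_right,
      right_pow, singleShift_right, hn, mul_inv_cancel]
  have hwx : Commute (singleShift a τ) (SemidirectProduct.inl w.left) :=
    hw ▸ (mem_centralizer_singleton_iff.mp
      (mul_mem hz (inv_mem (pow_mem (mem_centralizer_singleton_iff.mpr rfl) n)))).symm
  obtain ⟨c, hac, hc⟩ := eq_const_of_commute_singleShift_inl hτ hwx
  refine ⟨c, mem_centralizer_singleton_iff.mpr hac.eq.symm, n, ?_⟩
  calc z = w * singleShift a τ ^ n := (inv_mul_cancel_right z _).symm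
    _ = diag c * singleShift a τ ^ n := by rw [hw, hc]; rfl

variable (a) in
theorem diagMulZPow_surjective (hτ : τ ≠ 1) : Function.Surjective (diagMulZPow a τ) := by
  rintro ⟨z, hz⟩
  obtain ⟨c, hc, n, rfl⟩ := exists_diag_mul_pow_of_mem_centralizer hτ hz
  exact ⟨(⟨c, hc⟩, Multiplicative.ofAdd (n : ℤ)), Subtype.ext (by simp [coe_diagMulZPow])⟩

theorem zpowersHom_surjective (hτ : τ ≠ 1) : Function.Surjective (zpowersHom _ τ) := fun σ => by
  obtain ⟨n, -, rfl⟩ := ZMod.exists_pow_eq_multiplicative hτ σ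
  exact ⟨Multiplicative.ofAdd (n : ℤ), zpow_natCast τ n⟩

variable (a) in
theorem ker_diagMulZPow_le (hτ : τ ≠ 1) : (diagMulZPow a τ).ker ≤ (mkProdZPow a τ).ker := by
  rintro ⟨c, m⟩ h
  have h' : diag (c : K) * singleShift a τ ^ m.toAdd = 1 := congrArg Subtype.val h
  have hm : τ ^ m.toAdd = 1 := by
    simpa [right_zpow] using congrArg SemidirectProduct.right h'
  obtain ⟨k, hk⟩ := (ZMod.zpow_eq_one_iff_multiplicative hτ).mp hm
  rw [hk, zpow_mul, zpow_natCast, singleShift_pow_prime a hτ, ← map_zpow, ← map_mul,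
    ← map_one diag] at h'
  have hc : c = aZ K a ^ (-k) := Subtype.ext (by
    simpa [aZ, eq_comm, mul_eq_one_iff_eq_inv] using diag_injective h')
  rw [MonoidHom.mem_ker, mkProdZPow_apply, hm, hc]
  exact Prod.ext ((QuotientGroup.eq_one_iff _).mpr (zpow_mem (mem_zpowers _) _)) rfl

variable (a) in
noncomputable def centralizerQuotientHom (hτ : τ ≠ 1) :
    centralizer {singleShift a τ} →*
      (centralizer {a} ⧸ zpowers (aZ K a)) × Multiplicative (ZMod p) :=
  (diagMulZPow a τ).liftOfSurjective (diagMulZPow_surjective a hτ)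
    ⟨mkProdZPow a τ, ker_diagMulZPow_le a hτ⟩

theorem centralizerQuotientHom_diagMulZPow (hτ : τ ≠ 1)
    (y : centralizer {a} × Multiplicative ℤ) :
    centralizerQuotientHom a hτ (diagMulZPow a τ y) = mkProdZPow a τ y :=
  MonoidHom.liftOfRightInverse_comp_apply _ _ _ _ y

theorem centralizerQuotientHom_surjective (hτ : τ ≠ 1) :
    Function.Surjective (centralizerQuotientHom a hτ) := fun q => by
  obtain ⟨y, rfl⟩ := (QuotientGroup.mk'_surjective _).prodMap (zpowersHom_surjective hτ) q
  exact ⟨diagMulZPow a τ y, centralizerQuotientHom_diagMulZPow hτ y⟩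

theorem ker_centralizerQuotientHom (hτ : τ ≠ 1) :
    (centralizerQuotientHom a hτ).ker =
      zpowers ⟨diag a, diag_mem_centralizer a τ (aZ K a).2⟩ := by
  set d : centralizer {singleShift a τ} := ⟨diag a, diag_mem_centralizer a τ (aZ K a).2⟩
  have hd : diagMulZPow a τ (aZ K a, 1) = d := Subtype.ext (by simp [coe_diagMulZPow, aZ, d])
  have hd' : diagMulZPow a τ (1, Multiplicative.ofAdd (p : ℤ)) = d :=
    Subtype.ext (by simp [coe_diagMulZPow, singleShift_pow_prime a hτ, d])
  refine le_antisymm (fun z hz => ?_) (zpowers_le.mpr ?_)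
  · obtain ⟨⟨c, m⟩, rfl⟩ := diagMulZPow_surjective a hτ z
    rw [MonoidHom.mem_ker, centralizerQuotientHom_diagMulZPow, mkProdZPow_apply,
      Prod.mk_eq_one] at hz
    obtain ⟨j, rfl⟩ := mem_zpowers_iff.mp ((QuotientGroup.eq_one_iff c).mp hz.1)
    obtain ⟨k, hk⟩ := (ZMod.zpow_eq_one_iff_multiplicative hτ).mp hz.2
    have hy : (aZ K a ^ j, m) = (aZ K a, 1) ^ j * (1, Multiplicative.ofAdd (p : ℤ)) ^ k :=
      Prod.ext (by simp) (Multiplicative.toAdd.injective (by simp [hk, mul_comm]))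
    rw [hy, map_mul, map_zpow, map_zpow, hd, hd', ← zpow_add]
    exact zpow_mem (mem_zpowers d) _
  · rw [← hd, MonoidHom.mem_ker, centralizerQuotientHom_diagMulZPow, mkProdZPow_apply]
    exact Prod.ext ((QuotientGroup.eq_one_iff _).mpr (mem_zpowers _)) (zpow_zero τ)

end WreathP

/-- The isomorphism `Z_H(x)/D ≅ (Z_K(a)/⟨a⟩) × ℤ/p` is expressed, via the first isomorphism
theorem, by a surjective homomorphism `Z_H(x) → (Z_K(a)/⟨a⟩) × ℤ/p` with kernel `D`. -/
theorem centralizer_central_extension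
    (p : ℕ) (hp : p.Prime) (K : Type*) [Group K] (a : K)
    (τ : Multiplicative (ZMod p)) (hτ : τ ≠ 1) :
    (⟨Pi.mulSingle (0 : ZMod p) a, τ⟩ : WreathP p K) ^ p =
        SemidirectProduct.inl (fun _ => a) ∧
    ∃ hd : (SemidirectProduct.inl (fun _ => a) : WreathP p K) ∈
        Subgroup.centralizer {(⟨Pi.mulSingle (0 : ZMod p) a, τ⟩ : WreathP p K)},
      (∀ h ∈ Subgroup.centralizer {(⟨Pi.mulSingle (0 : ZMod p) a, τ⟩ : WreathP p K)},
        Commute (SemidirectProduct.inl (fun _ => a) : WreathP p K) h) ∧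
      ∃ ψ : ↥(Subgroup.centralizer
              {(⟨Pi.mulSingle (0 : ZMod p) a, τ⟩ : WreathP p K)}) →*
            (↥(Subgroup.centralizer ({a} : Set K)) ⧸ Subgroup.zpowers (aZ K a)) ×
              Multiplicative (ZMod p),
        Function.Surjective ψ ∧
        ψ.ker = Subgroup.zpowers
          (⟨SemidirectProduct.inl (fun _ => a), hd⟩ :
            ↥(Subgroup.centralizer
              {(⟨Pi.mulSingle (0 : ZMod p) a, τ⟩ : WreathP p K)})) := by
  have := Fact.mk hp
  have hx := WreathP.singleShift_pow_prime a hτ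
  refine ⟨hx, WreathP.diag_mem_centralizer a τ (aZ K a).2, fun h hh => ?_,
    WreathP.centralizerQuotientHom a hτ, WreathP.centralizerQuotientHom_surjective hτ,
    WreathP.ker_centralizerQuotientHom hτ⟩
  exact hx ▸ Commute.pow_left (Subgroup.mem_centralizer_singleton_iff.mp hh).symm p
end

section
/- Let p be a prime, K a finite group, H = K ≀ ℤ/p, a ∈ K, τ a nonzero element of ℤ/p, and x = ((a,1,…,1),τ) ∈ H. Then the centralizer Z_H(x) of x in H is isoclinic to the direct product Z_K(a) × ℤ/p. -/
open scoped commutatorElement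

/-- Two groups `G₁`, `G₂` with centers `Z₁`, `Z₂` are *isoclinic* if there are
isomorphisms `i : G₁/Z₁ ≃ G₂/Z₂` and `j : [G₁,G₁] ≃ [G₂,G₂]` compatible with the
commutator maps: whenever `x'Z₂ = i(xZ₁)` and `y'Z₂ = i(yZ₁)` one has
`j([x,y]) = [x',y']`. -/
def IsIsoclinic (G₁ G₂ : Type*) [Group G₁] [Group G₂] : Prop :=
  ∃ (i : (G₁ ⧸ Subgroup.center G₁) ≃* (G₂ ⧸ Subgroup.center G₂))
    (j : commutator G₁ ≃* commutator G₂),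
    ∀ (x y : G₁) (x' y' : G₂),
      (QuotientGroup.mk x' : G₂ ⧸ Subgroup.center G₂) = i (QuotientGroup.mk x) →
      (QuotientGroup.mk y' : G₂ ⧸ Subgroup.center G₂) = i (QuotientGroup.mk y) →
      (j ⟨⁅x, y⁆, Subgroup.commutator_mem_commutator (Subgroup.mem_top x)
          (Subgroup.mem_top y)⟩ : G₂) = ⁅x', y'⁆

/-!
Write `x = ((a,1,…,1),τ)`. An element of `Z_H(x)` has shift component a power of `τ`, since `τ`
generates `ℤ/p`; dividing by that power of `x` leaves an element `(w,1)`, and `(w,1)x = x(w,1)`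
reads `w(i-τ) = w(i)` for `i ≠ 0` and `w(0) a = a w(-τ)`. Hence `w` is constant with value in
`Z_K(a)`, so `Z_H(x)` is the diagonal copy of `Z_K(a)` times the central subgroup `⟨x⟩`. A group
that is an injective image of `Q` times central elements is isoclinic to `Q`; this applies both to
`Z_H(x)` and to `Z_K(a) × ℤ/p`.
-/

open Subgroup

section Isoclinism

variable {G Q : Type*} [Group G] [Group Q]

theorem commutatorElement_mul_mem_center_left {g h z : G} (hz : z ∈ center G) :
    ⁅g * z, h⁆ = ⁅g, h⁆ := by
  have hzh : z * h * z⁻¹ = h := by rw [← mem_center_iff.mp hz h, mul_inv_cancel_right]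
  calc ⁅g * z, h⁆ = g * (z * h * z⁻¹) * g⁻¹ * h⁻¹ := by simp only [commutatorElement_def]; group
    _ = ⁅g, h⁆ := by rw [hzh, commutatorElement_def]

theorem commutatorElement_mul_mem_center_right {g h z : G} (hz : z ∈ center G) :
    ⁅g, h * z⁆ = ⁅g, h⁆ := by
  have hzg : z * g⁻¹ * z⁻¹ = g⁻¹ := by rw [← mem_center_iff.mp hz g⁻¹, mul_inv_cancel_right]
  calc ⁅g, h * z⁆ = g * h * (z * g⁻¹ * z⁻¹) * h⁻¹ := by simp only [commutatorElement_def]; group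
    _ = ⁅g, h⁆ := by rw [hzg, commutatorElement_def]

theorem commutatorElement_eq_of_mk_center_eq {x y x' y' : G}
    (hx : (x : G ⧸ center G) = x') (hy : (y : G ⧸ center G) = y') : ⁅x, y⁆ = ⁅x', y'⁆ := by
  obtain ⟨z, hz, rfl⟩ : ∃ z ∈ center G, x' = x * z :=
    ⟨x⁻¹ * x', QuotientGroup.eq.mp hx, (mul_inv_cancel_left x x').symm⟩
  obtain ⟨w, hw, rfl⟩ : ∃ w ∈ center G, y' = y * w :=
    ⟨y⁻¹ * y', QuotientGroup.eq.mp hy, (mul_inv_cancel_left y y').symm⟩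
  rw [commutatorElement_mul_mem_center_left hz, commutatorElement_mul_mem_center_right hw]

theorem IsIsoclinic.symm {G₁ G₂ : Type*} [Group G₁] [Group G₂] (h : IsIsoclinic G₁ G₂) :
    IsIsoclinic G₂ G₁ := by
  obtain ⟨i, j, hij⟩ := h
  refine ⟨i.symm, j.symm, fun x y x' y' hx hy => ?_⟩
  have hj : j ⟨⁅x', y'⁆, commutator_mem_commutator (mem_top x') (mem_top y')⟩ =
      ⟨⁅x, y⁆, commutator_mem_commutator (mem_top x) (mem_top y)⟩ :=
    Subtype.ext (hij x' y' x y (by rw [hx, i.apply_symm_apply]) (by rw [hy, i.apply_symm_apply]))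
  rw [← hj, MulEquiv.symm_apply_apply]

theorem IsIsoclinic.trans {G₁ G₂ G₃ : Type*} [Group G₁] [Group G₂] [Group G₃]
    (h₁₂ : IsIsoclinic G₁ G₂) (h₂₃ : IsIsoclinic G₂ G₃) : IsIsoclinic G₁ G₃ := by
  obtain ⟨i₁, j₁, h₁⟩ := h₁₂
  obtain ⟨i₂, j₂, h₂⟩ := h₂₃
  refine ⟨i₁.trans i₂, j₁.trans j₂, fun x y x' y' hx hy => ?_⟩
  obtain ⟨u, hu⟩ := QuotientGroup.mk_surjective (i₁ x)
  obtain ⟨v, hv⟩ := QuotientGroup.mk_surjective (i₁ y)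
  have hj₁ : j₁ ⟨⁅x, y⁆, commutator_mem_commutator (mem_top x) (mem_top y)⟩ =
      ⟨⁅u, v⁆, commutator_mem_commutator (mem_top u) (mem_top v)⟩ :=
    Subtype.ext (h₁ x y u v hu hv)
  show (j₂ (j₁ _) : G₃) = _
  rw [hj₁]
  exact h₂ u v x' y' (by rw [hu]; exact hx) (by rw [hv]; exact hy)

theorem IsIsoclinic.of_injective_of_surjective_mod_center {f : Q →* G} (hf : Function.Injective f)
    (hf_center : ∀ g : G, ∃ q : Q, (f q : G ⧸ center G) = g) : IsIsoclinic Q G := by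
  have comap_center : (center G).comap f = center Q := by
    ext q
    simp only [mem_comap, mem_center_iff, ← commutatorElement_eq_one_iff_mul_comm]
    refine ⟨fun h q' => hf ?_, fun h g => ?_⟩
    · rw [map_commutatorElement, h, map_one]
    · obtain ⟨q', hq'⟩ := hf_center g
      rw [← commutatorElement_eq_of_mk_center_eq hq' rfl, ← map_commutatorElement, h, map_one]
  have map_commutator : (commutator Q).map f = commutator G := by
    refine le_antisymm ?_ ?_
    · rw [commutator_def, Subgroup.map_commutator]
      exact commutator_mono le_top le_top
    · rw [commutator_def, commutator_le]
      rintro g₁ - g₂ -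
      obtain ⟨q₁, h₁⟩ := hf_center g₁
      obtain ⟨q₂, h₂⟩ := hf_center g₂
      rw [← commutatorElement_eq_of_mk_center_eq h₁ h₂, ← map_commutatorElement]
      exact mem_map_of_mem f (commutator_mem_commutator (mem_top q₁) (mem_top q₂))
  let φ := (QuotientGroup.mk' (center G)).comp f
  have hφ : Function.Surjective φ := fun g' => by
    obtain ⟨g, rfl⟩ := QuotientGroup.mk_surjective g'
    exact hf_center g
  have ker_φ : center Q = φ.ker := by
    rw [← MonoidHom.comap_ker, QuotientGroup.ker_mk', comap_center]
  refine ⟨(QuotientGroup.quotientMulEquivOfEq ker_φ).trans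
      (QuotientGroup.quotientKerEquivOfSurjective φ hφ),
    ((commutator Q).equivMapOfInjective f hf).trans (MulEquiv.subgroupCongr map_commutator),
    fun x y x' y' hx hy => ?_⟩
  show f ⁅x, y⁆ = _
  rw [map_commutatorElement]
  exact commutatorElement_eq_of_mk_center_eq hx.symm hy.symm

theorem isIsoclinic_prod_commGroup (Q A : Type*) [Group Q] [CommGroup A] :
    IsIsoclinic Q (Q × A) := by
  refine IsIsoclinic.of_injective_of_surjective_mod_center (f := MonoidHom.inl Q A) (fun _ _ h => congrArg Prod.fst h)
    fun g => ⟨g.1, QuotientGroup.eq.mpr (mem_center_iff.mpr fun h => ?_)⟩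
  ext
  · simp
  · exact mul_comm _ _

end Isoclinism

theorem ZMod.apply_eq_apply_zero_of_apply_sub_eq {p : ℕ} [Fact p.Prime] {α : Type*}
    {t : ZMod p} (ht : t ≠ 0) {w : ZMod p → α} (hw : ∀ i ≠ 0, w (i - t) = w i) (i : ZMod p) :
    w i = w 0 := by
  have multiples : ∀ n < p, w (n * t) = w 0 := by
    intro n hn
    induction n with
    | zero => simp
    | succ m ih =>
      have hm : ((m + 1 : ℕ) : ZMod p) ≠ 0 := by
        rw [Ne, ZMod.natCast_eq_zero_iff]
        exact Nat.not_dvd_of_pos_of_lt m.succ_pos hn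
      rw [← hw _ (mul_ne_zero hm ht), ← ih (by omega), Nat.cast_succ, add_one_mul,
        add_sub_cancel_right]
  simpa [ZMod.natCast_zmod_val, inv_mul_cancel_right₀ ht] using
    multiples (i * t⁻¹).val (ZMod.val_lt _)

theorem ZMod.exists_pow_eq_of_ne_one {p : ℕ} [Fact p.Prime] {τ : Multiplicative (ZMod p)}
    (hτ : τ ≠ 1) (σ : Multiplicative (ZMod p)) : ∃ n : ℕ, τ ^ n = σ := by
  have ht : Multiplicative.toAdd τ ≠ 0 := fun h => hτ (Multiplicative.toAdd.injective h)
  refine ⟨(σ.toAdd * τ.toAdd⁻¹).val, Multiplicative.toAdd.injective ?_⟩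
  rw [toAdd_pow, nsmul_eq_mul, ZMod.natCast_zmod_val, inv_mul_cancel_right₀ ht]

namespace WreathP

variable {p : ℕ} {K : Type*} [Group K]

def diagonal : K →* WreathP p K :=
  SemidirectProduct.inl.comp (Pi.constMonoidHom (ZMod p) K)

theorem diagonal_injective : Function.Injective (diagonal : K → WreathP p K) :=
  fun _ _ h => congrFun (SemidirectProduct.inl_injective h) 0

theorem diagonal_mem_centralizer {a c : K} (hc : c ∈ centralizer {a})
    (τ : Multiplicative (ZMod p)) :
    diagonal c ∈ centralizer {(⟨Pi.mulSingle 0 a, τ⟩ : WreathP p K)} := by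
  rw [mem_centralizer_singleton_iff]
  ext i
  · show c * (Pi.mulSingle 0 a : ZMod p → K) (i - Multiplicative.toAdd 1) =
      (Pi.mulSingle 0 a : ZMod p → K) i * c
    rw [toAdd_one, sub_zero]
    rcases eq_or_ne i 0 with rfl | hi
    · simpa using mem_centralizer_singleton_iff.mp hc
    · simp [Pi.mulSingle_eq_of_ne hi]
  · exact (one_mul τ).trans (mul_one τ).symm

theorem exists_diagonal_eq_of_mem_centralizer [Fact p.Prime] {a : K}
    {τ : Multiplicative (ZMod p)} (hτ : τ ≠ 1) {g : WreathP p K}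
    (hg : g ∈ centralizer {(⟨Pi.mulSingle 0 a, τ⟩ : WreathP p K)}) (hg_right : g.right = 1) :
    ∃ c ∈ centralizer {a}, diagonal c = g := by
  obtain ⟨w, σ⟩ := g
  subst hg_right
  have hcomm : ∀ i, w i * (Pi.mulSingle 0 a : ZMod p → K) i =
      (Pi.mulSingle 0 a : ZMod p → K) i * w (i - τ.toAdd) := by
    intro i
    have h := congrFun (congrArg SemidirectProduct.left (mem_centralizer_singleton_iff.mp hg)) i
    change w i * (Pi.mulSingle 0 a : ZMod p → K) (i - Multiplicative.toAdd 1) =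
      (Pi.mulSingle 0 a : ZMod p → K) i * w (i - τ.toAdd) at h
    rwa [toAdd_one, sub_zero] at h
  -- away from the coordinate `0`, where `a` sits, `w` is invariant under the shift by `τ`
  have hconst : ∀ i, w i = w 0 :=
    ZMod.apply_eq_apply_zero_of_apply_sub_eq (fun h => hτ (Multiplicative.toAdd.injective h))
      fun i hi => by simpa [Pi.mulSingle_eq_of_ne hi] using (hcomm i).symm
  refine ⟨w 0, mem_centralizer_singleton_iff.mpr ?_, ?_⟩
  · have h := hcomm 0
    rwa [hconst (0 - _), Pi.mulSingle_eq_same] at h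
  · ext i
    · exact (hconst i).symm
    · rfl

theorem exists_diagonal_mul_pow_of_mem_centralizer [Fact p.Prime] {a : K}
    {τ : Multiplicative (ZMod p)} (hτ : τ ≠ 1) {g : WreathP p K}
    (hg : g ∈ centralizer {(⟨Pi.mulSingle 0 a, τ⟩ : WreathP p K)}) :
    ∃ c ∈ centralizer {a}, ∃ n : ℕ, g = diagonal c * ⟨Pi.mulSingle 0 a, τ⟩ ^ n := by
  set x : WreathP p K := ⟨Pi.mulSingle 0 a, τ⟩
  obtain ⟨n, hn⟩ := ZMod.exists_pow_eq_of_ne_one hτ g.right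
  have hx : x ∈ centralizer {x} := mem_centralizer_singleton_iff.mpr rfl
  have h_right : (g * (x ^ n)⁻¹).right = 1 := by
    rw [SemidirectProduct.mul_right, SemidirectProduct.inv_right, ← hn,
      ← SemidirectProduct.rightHom_eq_right, map_pow]
    exact mul_inv_cancel _
  obtain ⟨c, hc, hcg⟩ := exists_diagonal_eq_of_mem_centralizer hτ
    (mul_mem hg (inv_mem (pow_mem hx n))) h_right
  exact ⟨c, hc, n, by rw [hcg, inv_mul_cancel_right]⟩

end WreathP

theorem centralizer_isoclinic_prod_general
    (p : ℕ) (hp : p.Prime) (K : Type*) [Group K] (a : K)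
    (τ : Multiplicative (ZMod p)) (hτ : τ ≠ 1) :
    IsIsoclinic
      ↥(Subgroup.centralizer {(⟨Pi.mulSingle (0 : ZMod p) a, τ⟩ : WreathP p K)})
      (↥(Subgroup.centralizer ({a} : Set K)) × Multiplicative (ZMod p)) := by
  have := Fact.mk hp
  set x : WreathP p K := ⟨Pi.mulSingle 0 a, τ⟩
  have hx : (⟨x, mem_centralizer_singleton_iff.mpr rfl⟩ : centralizer {x}) ∈
      center (centralizer {x}) :=
    mem_center_iff.mpr fun g => Subtype.ext (mem_centralizer_singleton_iff.mp g.2)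
  let f : centralizer {a} →* centralizer {x} :=
    (WreathP.diagonal.comp (centralizer {a}).subtype).codRestrict _
      fun c => WreathP.diagonal_mem_centralizer c.2 τ
  have hf : Function.Injective f := fun c d h =>
    Subtype.ext (WreathP.diagonal_injective (congrArg Subtype.val h))
  refine (IsIsoclinic.of_injective_of_surjective_mod_center hf fun g => ?_).symm.trans (isIsoclinic_prod_commGroup _ _)
  obtain ⟨c, hc, n, hg⟩ := WreathP.exists_diagonal_mul_pow_of_mem_centralizer hτ g.2
  refine ⟨⟨c, hc⟩, QuotientGroup.eq.mpr ?_⟩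
  convert pow_mem hx n
  ext1
  rw [coe_mul, coe_inv, hg, SubmonoidClass.coe_pow]
  exact inv_mul_cancel_left _ _

/-- Let `p` be a prime, `K` a finite group, `H = K ≀ ℤ/p`, `a ∈ K`, `τ` a
nonzero element of `ℤ/p`, and `x = ((a,1,…,1),τ) ∈ H`.  Then the centralizer `Z_H(x)` of
`x` in `H` is isoclinic to the direct product `Z_K(a) × ℤ/p`. -/
theorem centralizer_isoclinic_prod
    (p : ℕ) (hp : p.Prime) (K : Type*) [Group K] [Finite K] (a : K)
    (τ : Multiplicative (ZMod p)) (hτ : τ ≠ 1) :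
    IsIsoclinic
      ↥(Subgroup.centralizer {(⟨Pi.mulSingle (0 : ZMod p) a, τ⟩ : WreathP p K)})
      (↥(Subgroup.centralizer ({a} : Set K)) × Multiplicative (ZMod p)) :=
  centralizer_isoclinic_prod_general p hp K a τ hτ
end

section
/- Let (i,j) be an isoclinism between groups G1 (with center Z1) and G2 (with center Z2), and let K1 be a normal subgroup of G1 contained in the commutator subgroup [G1,G1]. Then the image j(K1) is a normal subgroup of G2 contained in [G2,G2], and the quotient groups G1/K1 and G2/j(K1) are isoclinic. -/
open scoped commutatorElement

/-!
An isoclinism `(i, j)` descends to `G₁ ⧸ K` and `G₂ ⧸ j(K)`. For `g' ↔ g` under `i`, the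
isoclinism identity `j ⁅g, x⁆ = ⁅g', x'⁆` shows that `⁅g, ·⁆` lands in `K` exactly when `⁅g', ·⁆`
lands in `j(K)`; so `i` matches the preimages of the centres of the two quotients and induces an
isomorphism of their central quotients. On the other side `j` induces
`[G₁,G₁] ⧸ (K ∩ [G₁,G₁]) ≃* [G₂,G₂] ⧸ j(K)`, i.e. an isomorphism of the commutator subgroups of
the quotients, and compatibility is inherited from `(i, j)` because commutators only depend on
their arguments modulo the centre. Normality of `j(K)` comes from `j (g c g⁻¹) = g' (j c) g'⁻¹`,
which holds on commutators and hence on the subgroup `[G₁,G₁]` they generate.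
-/

open Subgroup QuotientGroup

section Group
variable {G : Type*} [Group G]

theorem commutatorElement_mul_left_of_mem_center {a z : G} (b : G) (hz : z ∈ center G) :
    ⁅a * z, b⁆ = ⁅a, b⁆ := by
  have hzb : z * b * z⁻¹ = b := by rw [← mem_center_iff.mp hz b]; group
  calc ⁅a * z, b⁆ = a * (z * b * z⁻¹) * a⁻¹ * b⁻¹ := by rw [commutatorElement_def]; group
    _ = ⁅a, b⁆ := by rw [hzb, commutatorElement_def]

theorem commutatorElement_eq_of_mk_center_eq_s16 {a a' b b' : G} (ha : (a : G ⧸ center G) = a')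
    (hb : (b : G ⧸ center G) = b') : ⁅a, b⁆ = ⁅a', b'⁆ := by
  obtain ⟨z, hz, rfl⟩ : ∃ z ∈ center G, a * z = a' :=
    ⟨_, QuotientGroup.eq.mp ha, mul_inv_cancel_left a a'⟩
  obtain ⟨w, hw, rfl⟩ : ∃ w ∈ center G, b * w = b' :=
    ⟨_, QuotientGroup.eq.mp hb, mul_inv_cancel_left b b'⟩
  rw [commutatorElement_mul_left_of_mem_center _ hz, ← commutatorElement_inv (b * w),
    commutatorElement_mul_left_of_mem_center _ hw, commutatorElement_inv]

theorem closure_preimage_commutatorSet_eq_top :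
    closure (((↑) : commutator G → G) ⁻¹' commutatorSet G) = ⊤ := by
  -- generalized so that the equation can be substituted inside the subtype `↥H`
  have key : ∀ H : Subgroup G, H = closure (commutatorSet G) →
      closure (((↑) : H → G) ⁻¹' commutatorSet G) = ⊤ := by
    rintro H rfl
    exact closure_closure_coe_preimage
  exact key _ (commutator_eq_closure G)

theorem commutator_hom_ext {M : Type*} [Monoid M] {f g : commutator G →* M}
    (h : ∀ x y : G, f ⟨⁅x, y⁆, commutator_mem_commutator (mem_top x) (mem_top y)⟩ =
      g ⟨⁅x, y⁆, commutator_mem_commutator (mem_top x) (mem_top y)⟩) : f = g :=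
  MonoidHom.eq_of_eqOn_dense closure_preimage_commutatorSet_eq_top
    (by rintro ⟨_, _⟩ ⟨x, y, rfl⟩; exact h x y)

noncomputable def MonoidHom.mulEquivOfKerEq {H₁ H₂ : Type*} [Group H₁] [Group H₂]
    {φ : G →* H₁} {ψ : G →* H₂} (hφ : Function.Surjective φ) (hψ : Function.Surjective ψ)
    (h : φ.ker = ψ.ker) : H₁ ≃* H₂ :=
  (liftEquiv φ.ker hφ rfl).symm.trans (liftEquiv φ.ker hψ h)

theorem MonoidHom.mulEquivOfKerEq_apply {H₁ H₂ : Type*} [Group H₁] [Group H₂]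
    {φ : G →* H₁} {ψ : G →* H₂} (hφ : Function.Surjective φ) (hψ : Function.Surjective ψ)
    (h : φ.ker = ψ.ker) (g : G) : MonoidHom.mulEquivOfKerEq hφ hψ h (φ g) = ψ g := by
  show liftEquiv _ hψ h ((liftEquiv _ hφ rfl).symm (liftEquiv _ hφ rfl (g : G ⧸ φ.ker))) = ψ g
  rw [MulEquiv.symm_apply_apply, liftEquiv_mk]

variable (N : Subgroup G) [N.Normal]

def centerQuotientMk : G →* (G ⧸ N) ⧸ center (G ⧸ N) := (mk' _).comp (mk' N)

theorem centerQuotientMk_surjective : Function.Surjective (centerQuotientMk N) :=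
  (mk'_surjective _).comp (mk'_surjective N)

theorem ker_centerQuotientMk : (centerQuotientMk N).ker = N.upperCentralSeriesStep := by
  rw [centerQuotientMk, ← MonoidHom.comap_ker, ker_mk',
    Subgroup.upperCentralSeriesStep_eq_comap_center]

theorem center_le_upperCentralSeriesStep : center G ≤ N.upperCentralSeriesStep := by
  intro z hz
  rw [Subgroup.mem_upperCentralSeriesStep]
  intro y
  rw [commutatorElement_eq_one_iff_mul_comm.mpr (mem_center_iff.mp hz y).symm]
  exact one_mem N

def centerQuotientMap : G ⧸ center G →* (G ⧸ N) ⧸ center (G ⧸ N) :=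
  lift _ (centerQuotientMk N)
    ((center_le_upperCentralSeriesStep N).trans (ker_centerQuotientMk N).ge)

theorem centerQuotientMap_surjective : Function.Surjective (centerQuotientMap N) :=
  lift_surjective_of_surjective _ _ (centerQuotientMk_surjective N) _

theorem map_mk'_commutator : (commutator G).map (mk' N) = commutator (G ⧸ N) := by
  rw [map_commutator_eq, range_mk', commutator_def]

def commutatorMk : commutator G →* commutator (G ⧸ N) :=
  ((mk' N).domRestrict (commutator G)).codRestrict _ fun c =>
    map_mk'_commutator N ▸ mem_map_of_mem _ c.2

theorem commutatorMk_surjective : Function.Surjective (commutatorMk N) := by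
  rintro ⟨q, hq⟩
  rw [← map_mk'_commutator N] at hq
  obtain ⟨c, hc, rfl⟩ := hq
  exact ⟨⟨c, hc⟩, rfl⟩

theorem ker_commutatorMk : (commutatorMk N).ker = N.comap (commutator G).subtype := by
  rw [commutatorMk, MonoidHom.ker_codRestrict, MonoidHom.ker_domRestrict, ker_mk']
  rfl

end Group

section Isoclinism
variable {G₁ G₂ : Type*} [Group G₁] [Group G₂]

def IsIsoclinism (i : (G₁ ⧸ center G₁) ≃* (G₂ ⧸ center G₂))
    (j : commutator G₁ ≃* commutator G₂) : Prop :=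
  ∀ (x y : G₁) (x' y' : G₂),
    (x' : G₂ ⧸ center G₂) = i x → (y' : G₂ ⧸ center G₂) = i y →
      (j ⟨⁅x, y⁆, commutator_mem_commutator (mem_top x) (mem_top y)⟩ : G₂) = ⁅x', y'⁆

def mapCommutatorEquiv (j : commutator G₁ ≃* commutator G₂) (K : Subgroup G₁) :
    Subgroup G₂ :=
  Subgroup.map (commutator G₂).subtype
    (Subgroup.map j.toMonoidHom (Subgroup.comap (commutator G₁).subtype K))

theorem coe_mem_mapCommutatorEquiv_iff (j : commutator G₁ ≃* commutator G₂)
    (K : Subgroup G₁) (c : commutator G₁) :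
    (j c : G₂) ∈ mapCommutatorEquiv j K ↔ (c : G₁) ∈ K := by
  constructor
  · rintro ⟨_, ⟨d, hd, rfl⟩, hdc⟩
    rwa [j.injective (Subtype.ext hdc)] at hd
  · exact fun hc => ⟨j c, ⟨c, hc, rfl⟩, rfl⟩

theorem comap_subtype_mapCommutatorEquiv (j : commutator G₁ ≃* commutator G₂)
    (K : Subgroup G₁) :
    (mapCommutatorEquiv j K).comap (commutator G₂).subtype =
      (K.comap (commutator G₁).subtype).map j.toMonoidHom :=
  comap_map_eq_self_of_injective (subtype_injective _) _

theorem exists_mk_eq_apply_mk (i : (G₁ ⧸ center G₁) ≃* (G₂ ⧸ center G₂)) (g' : G₂) :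
    ∃ g : G₁, (g' : G₂ ⧸ center G₂) = i g := by
  obtain ⟨q, hq⟩ := i.surjective g'
  obtain ⟨g, rfl⟩ := mk_surjective q
  exact ⟨g, hq.symm⟩

theorem exists_commutatorQuotient_equiv (j : commutator G₁ ≃* commutator G₂)
    (K : Subgroup G₁) [K.Normal] [(mapCommutatorEquiv j K).Normal] :
    ∃ e : commutator (G₁ ⧸ K) ≃* commutator (G₂ ⧸ mapCommutatorEquiv j K),
      ∀ c : commutator G₁, e (commutatorMk K c) = commutatorMk _ (j c) := by
  have hker :
      (commutatorMk K).ker = ((commutatorMk (mapCommutatorEquiv j K)).comp j.toMonoidHom).ker := by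
    rw [← MonoidHom.comap_ker, ker_commutatorMk, ker_commutatorMk,
      comap_subtype_mapCommutatorEquiv, comap_map_eq_self_of_injective j.injective]
  exact ⟨MonoidHom.mulEquivOfKerEq (commutatorMk_surjective K)
    ((commutatorMk_surjective (mapCommutatorEquiv j K)).comp j.surjective) hker,
    MonoidHom.mulEquivOfKerEq_apply _ _ _⟩

namespace IsIsoclinism
variable {i : (G₁ ⧸ center G₁) ≃* (G₂ ⧸ center G₂)} {j : commutator G₁ ≃* commutator G₂}
  (hij : IsIsoclinism i j)
include hij

theorem map_conjNormal {g : G₁} {g' : G₂} (hg : (g' : G₂ ⧸ center G₂) = i g)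
    (c : commutator G₁) : j (MulAut.conjNormal g c) = MulAut.conjNormal g' (j c) := by
  suffices h : j.toMonoidHom.comp (MulAut.conjNormal g).toMonoidHom =
      (MulAut.conjNormal g').toMonoidHom.comp j.toMonoidHom from DFunLike.congr_fun h c
  refine commutator_hom_ext fun x y => Subtype.ext ?_
  obtain ⟨x', hx⟩ := mk_surjective (i x)
  obtain ⟨y', hy⟩ := mk_surjective (i y)
  have lift_conj : ∀ {u : G₁} {u' : G₂}, (u' : G₂ ⧸ center G₂) = i u →
      ((g' * u' * g'⁻¹ : G₂) : G₂ ⧸ center G₂) = i (g * u * g⁻¹ : G₁) := fun hu => by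
    simp only [QuotientGroup.mk_mul, QuotientGroup.mk_inv, map_mul, map_inv, hu, hg]
  have hconj :
      MulAut.conjNormal g ⟨⁅x, y⁆, commutator_mem_commutator (mem_top x) (mem_top y)⟩ =
        ⟨⁅g * x * g⁻¹, g * y * g⁻¹⁆, commutator_mem_commutator (mem_top _) (mem_top _)⟩ :=
    Subtype.ext <| (MulAut.conjNormal_apply _ _).trans (by group)
  simp only [MonoidHom.comp_apply, MulEquiv.coe_toMonoidHom]
  calc (j (MulAut.conjNormal g _) : G₂) = ⁅g' * x' * g'⁻¹, g' * y' * g'⁻¹⁆ :=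
        (congrArg (fun c => (j c : G₂)) hconj).trans (hij _ _ _ _ (lift_conj hx) (lift_conj hy))
    _ = g' * ⁅x', y'⁆ * g'⁻¹ := by group
    _ = _ := by rw [MulAut.conjNormal_apply, hij _ _ _ _ hx hy]

theorem normal_mapCommutatorEquiv (K : Subgroup G₁) [K.Normal] :
    (mapCommutatorEquiv j K).Normal := by
  constructor
  rintro _ ⟨_, ⟨c, hc, rfl⟩, rfl⟩ g'
  obtain ⟨g, hg⟩ := exists_mk_eq_apply_mk i g'
  have key := coe_mem_mapCommutatorEquiv_iff j K (MulAut.conjNormal g c)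
  rw [hij.map_conjNormal hg, MulAut.conjNormal_apply, MulAut.conjNormal_apply] at key
  exact key.mpr (‹K.Normal›.conj_mem _ hc g)

variable (K : Subgroup G₁) [K.Normal] [(mapCommutatorEquiv j K).Normal]

theorem mem_upperCentralSeriesStep_iff {g : G₁} {g' : G₂}
    (hg : (g' : G₂ ⧸ center G₂) = i g) :
    g ∈ K.upperCentralSeriesStep ↔ g' ∈ (mapCommutatorEquiv j K).upperCentralSeriesStep := by
  simp only [Subgroup.mem_upperCentralSeriesStep]
  constructor
  · intro h x'
    obtain ⟨x, hx⟩ := exists_mk_eq_apply_mk i x'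
    rw [← hij g x g' x' hg hx, coe_mem_mapCommutatorEquiv_iff]
    exact h x
  · intro h x
    obtain ⟨x', hx⟩ := mk_surjective (i x)
    have hgx := h x'
    rw [← hij g x g' x' hg hx] at hgx
    exact (coe_mem_mapCommutatorEquiv_iff j K _).mp hgx

theorem exists_centerQuotient_equiv :
    ∃ e : (G₁ ⧸ K) ⧸ center (G₁ ⧸ K) ≃*
        (G₂ ⧸ mapCommutatorEquiv j K) ⧸ center (G₂ ⧸ mapCommutatorEquiv j K),
      ∀ (g : G₁) (g' : G₂), (g' : G₂ ⧸ center G₂) = i g →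
        e (centerQuotientMk K g) = centerQuotientMk _ g' := by
  set ψ := (centerQuotientMap (mapCommutatorEquiv j K)).comp
    (i.toMonoidHom.comp (mk' (center G₁)))
  have hψ (g : G₁) (g' : G₂) (hg : (g' : G₂ ⧸ center G₂) = i g) :
      ψ g = centerQuotientMk _ g' := by
    show centerQuotientMap _ (i g) = _
    rw [← hg]
    rfl
  have hψ_surj : Function.Surjective ψ :=
    (centerQuotientMap_surjective _).comp (i.surjective.comp (mk'_surjective _))
  have hker : (centerQuotientMk K).ker = ψ.ker := by
    ext g
    obtain ⟨g', hg⟩ := mk_surjective (i g)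
    rw [MonoidHom.mem_ker, MonoidHom.mem_ker, hψ g g' hg, ← MonoidHom.mem_ker,
      ← MonoidHom.mem_ker, ker_centerQuotientMk, ker_centerQuotientMk,
      hij.mem_upperCentralSeriesStep_iff K hg]
  exact ⟨MonoidHom.mulEquivOfKerEq (centerQuotientMk_surjective K) hψ_surj hker,
    fun g g' hg => (MonoidHom.mulEquivOfKerEq_apply _ _ _ g).trans (hψ g g' hg)⟩

theorem isIsoclinic_quotient : IsIsoclinic (G₁ ⧸ K) (G₂ ⧸ mapCommutatorEquiv j K) := by
  obtain ⟨iK, hiK⟩ := hij.exists_centerQuotient_equiv K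
  obtain ⟨jK, hjK⟩ := exists_commutatorQuotient_equiv j K
  refine ⟨iK, jK, ?_⟩
  intro x y x' y' hx hy
  obtain ⟨a, rfl⟩ := mk_surjective x
  obtain ⟨b, rfl⟩ := mk_surjective y
  obtain ⟨a', rfl⟩ := mk_surjective x'
  obtain ⟨b', rfl⟩ := mk_surjective y'
  obtain ⟨a₀, ha₀⟩ := mk_surjective (i a)
  obtain ⟨b₀, hb₀⟩ := mk_surjective (i b)
  have hab : (⟨⁅(a : G₁ ⧸ K), b⁆, commutator_mem_commutator (mem_top _) (mem_top _)⟩ :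
      commutator (G₁ ⧸ K)) =
        commutatorMk K ⟨⁅a, b⁆, commutator_mem_commutator (mem_top _) (mem_top _)⟩ :=
    Subtype.ext (map_commutatorElement (mk' K) a b).symm
  calc (jK _ : G₂ ⧸ mapCommutatorEquiv j K)
      = (j ⟨⁅a, b⁆, commutator_mem_commutator (mem_top _) (mem_top _)⟩ : G₂) :=
        congrArg Subtype.val ((congrArg jK hab).trans (hjK _))
    _ = ⁅(a₀ : G₂ ⧸ mapCommutatorEquiv j K), (b₀ : G₂ ⧸ mapCommutatorEquiv j K)⁆ := by
        rw [hij a b a₀ b₀ ha₀ hb₀]; rfl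
    _ = ⁅(a' : G₂ ⧸ mapCommutatorEquiv j K), (b' : G₂ ⧸ mapCommutatorEquiv j K)⁆ :=
        commutatorElement_eq_of_mk_center_eq_s16 (hx.trans (hiK a a₀ ha₀)).symm
          (hy.trans (hiK b b₀ hb₀)).symm

end IsIsoclinism

end Isoclinism

theorem corresponding_quotients_isoclinic_general
    (G₁ G₂ : Type*) [Group G₁] [Group G₂]
    (i : (G₁ ⧸ Subgroup.center G₁) ≃* (G₂ ⧸ Subgroup.center G₂))
    (j : commutator G₁ ≃* commutator G₂)
    (hij : ∀ (x y : G₁) (x' y' : G₂),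
      (QuotientGroup.mk x' : G₂ ⧸ Subgroup.center G₂) = i (QuotientGroup.mk x) →
      (QuotientGroup.mk y' : G₂ ⧸ Subgroup.center G₂) = i (QuotientGroup.mk y) →
      (j ⟨⁅x, y⁆, Subgroup.commutator_mem_commutator (Subgroup.mem_top x)
          (Subgroup.mem_top y)⟩ : G₂) = ⁅x', y'⁆)
    (K₁ : Subgroup G₁) [K₁.Normal] :
    -- `j(K₁)`, as a subgroup of `G₂`
    ∃ hn : (Subgroup.map (commutator G₂).subtype
        (Subgroup.map j.toMonoidHom
          (Subgroup.comap (commutator G₁).subtype K₁))).Normal,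
      -- `j(K₁)` is contained in `[G₂,G₂]`
      Subgroup.map (commutator G₂).subtype
        (Subgroup.map j.toMonoidHom
          (Subgroup.comap (commutator G₁).subtype K₁)) ≤ commutator G₂ ∧
      -- `G₁/K₁` and `G₂/j(K₁)` are isoclinic
      @IsIsoclinic (G₁ ⧸ K₁)
        (G₂ ⧸ Subgroup.map (commutator G₂).subtype
          (Subgroup.map j.toMonoidHom
            (Subgroup.comap (commutator G₁).subtype K₁)))
        _ (@QuotientGroup.Quotient.group G₂ _ _ hn) := by
  have hij : IsIsoclinism i j := hij
  have hn := hij.normal_mapCommutatorEquiv K₁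
  exact ⟨hn, map_subtype_le _, hij.isIsoclinic_quotient K₁⟩

/-- Let `(i,j)` be an isoclinism between groups `G₁` (with center `Z₁`)
and `G₂` (with center `Z₂`), and let `K₁` be a normal subgroup of `G₁` contained in the
commutator subgroup `[G₁,G₁]`.  Then the image `j(K₁)` is a normal subgroup of `G₂`
contained in `[G₂,G₂]`, and the quotient groups `G₁/K₁` and `G₂/j(K₁)` are isoclinic. -/
theorem corresponding_quotients_isoclinic
    (G₁ G₂ : Type*) [Group G₁] [Group G₂]
    (i : (G₁ ⧸ Subgroup.center G₁) ≃* (G₂ ⧸ Subgroup.center G₂))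
    (j : commutator G₁ ≃* commutator G₂)
    (hij : ∀ (x y : G₁) (x' y' : G₂),
      (QuotientGroup.mk x' : G₂ ⧸ Subgroup.center G₂) = i (QuotientGroup.mk x) →
      (QuotientGroup.mk y' : G₂ ⧸ Subgroup.center G₂) = i (QuotientGroup.mk y) →
      (j ⟨⁅x, y⁆, Subgroup.commutator_mem_commutator (Subgroup.mem_top x)
          (Subgroup.mem_top y)⟩ : G₂) = ⁅x', y'⁆)
    (K₁ : Subgroup G₁) [K₁.Normal] (hK₁ : K₁ ≤ commutator G₁) :
    -- `j(K₁)`, as a subgroup of `G₂`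
    ∃ hn : (Subgroup.map (commutator G₂).subtype
        (Subgroup.map j.toMonoidHom
          (Subgroup.comap (commutator G₁).subtype K₁))).Normal,
      -- `j(K₁)` is contained in `[G₂,G₂]`
      Subgroup.map (commutator G₂).subtype
        (Subgroup.map j.toMonoidHom
          (Subgroup.comap (commutator G₁).subtype K₁)) ≤ commutator G₂ ∧
      -- `G₁/K₁` and `G₂/j(K₁)` are isoclinic
      @IsIsoclinic (G₁ ⧸ K₁)
        (G₂ ⧸ Subgroup.map (commutator G₂).subtype
          (Subgroup.map j.toMonoidHom
            (Subgroup.comap (commutator G₁).subtype K₁)))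
        _ (@QuotientGroup.Quotient.group G₂ _ _ hn) :=
  corresponding_quotients_isoclinic_general G₁ G₂ i j hij K₁
end
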